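/- Let u : ℝ → ℝ be 3 times continuously differentiable (ContDiff ℝ 3) and fix x ∈ ℝ. Then each of the three sub-stencil interpolation errors h ↦ u(x + h/2) - ( -(5/4)·u(x-h) + (9/4)·u(x) - (3h/4)·u'(x-h) ), h ↦ u(x + h/2) - ( (1/4)·u(x) + (3/4)·u(x+h) - (h/4)·u'(x+h) ), and h ↦ u(x + h/2) - ( -(1/8)·u(x-h) + (3/4)·u(x) + (3/8)·u(x+h) ) is O(h³) as h → 0 (IsBigO with respect to the filter 𝓝 0 of the function h ↦ h³), where u' denotes the derivative of u. -/

import Mathlib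

/-!
Each interpolation reproduces quadratics exactly. Hence, after expanding `u (x + c * h)` to
second order (remainder `O(h³)` for `u ∈ C³`) and `deriv u (x + c * h)` to first order
(remainder `O(h²)`, multiplied by `h`), all Taylor-polynomial terms cancel and each interpolation
error is a fixed linear combination of these remainders.
-/

open Asymptotics Filter Set Topology

theorem isBigO_sub_taylorWithinEval {E : Type*} [NormedAddCommGroup E] [NormedSpace ℝ E]
    {f : ℝ → E} {x₀ : ℝ} {n : ℕ} (hf : ContDiff ℝ (n + 1) f) :
    (fun x ↦ f x - taylorWithinEval f n univ x₀ x) =O[𝓝 x₀] fun x ↦ (x - x₀) ^ (n + 1) := by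
  have hnext : (fun x ↦ taylorWithinEval f (n + 1) univ x₀ x - taylorWithinEval f n univ x₀ x)
      =O[𝓝 x₀] fun x ↦ (x - x₀) ^ (n + 1) := by
    simp_rw [taylorWithinEval_succ, add_sub_cancel_left]
    simpa using ((isBigO_refl (fun x ↦ (x - x₀) ^ (n + 1)) (𝓝 x₀)).const_mul_left
      ((n + 1 : ℝ) * n.factorial)⁻¹).smul
        (isBigO_const_const (iteratedDerivWithin (n + 1) f univ x₀) (one_ne_zero' ℝ) (𝓝 x₀))
  have hf' : ContDiff ℝ ↑(n + 1) f := by exact_mod_cast hf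
  have hrem := (taylor_isLittleO_univ (x₀ := x₀) hf').isBigO
  exact (hrem.add hnext).congr_left fun x ↦ sub_add_sub_cancel _ _ _

theorem taylorWithinEval_univ_two (f : ℝ → ℝ) (x₀ x : ℝ) :
    taylorWithinEval f 2 univ x₀ x =
      f x₀ + (x - x₀) * deriv f x₀ + (x - x₀) ^ 2 / 2 * deriv (deriv f) x₀ := by
  simp only [taylor_within_apply, Finset.sum_range_succ, Finset.sum_range_zero,
    iteratedDerivWithin_univ, iteratedDeriv_succ, iteratedDeriv_zero, Nat.factorial, smul_eq_mul]
  push_cast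
  ring

theorem taylorWithinEval_univ_one (f : ℝ → ℝ) (x₀ x : ℝ) :
    taylorWithinEval f 1 univ x₀ x = f x₀ + (x - x₀) * deriv f x₀ := by
  simp only [taylor_within_apply, Finset.sum_range_succ, Finset.sum_range_zero,
    iteratedDerivWithin_univ, iteratedDeriv_succ, iteratedDeriv_zero, Nat.factorial, smul_eq_mul]
  push_cast
  ring

theorem Asymptotics.IsBigO.comp_add_mul {E : Type*} [Norm E] {F : ℝ → E} {x₀ : ℝ} {n : ℕ}
    (hF : F =O[𝓝 x₀] fun x ↦ (x - x₀) ^ n) (c : ℝ) :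
    (fun h ↦ F (x₀ + c * h)) =O[𝓝 0] fun h ↦ h ^ n := by
  have hlim : Tendsto (fun h : ℝ ↦ x₀ + c * h) (𝓝 0) (𝓝 x₀) := by
    simpa using ((continuous_const_mul c).const_add x₀).tendsto (0 : ℝ)
  refine (hF.comp_tendsto hlim).trans ?_
  simp_rw [Function.comp_def, add_sub_cancel_left, mul_pow]
  exact (isBigO_refl _ _).const_mul_left _

theorem isBigO_sub_taylor_two_comp_mul {u : ℝ → ℝ} (hu : ContDiff ℝ 3 u) (x c : ℝ) :
    (fun h ↦ u (x + c * h) - (u x + c * h * deriv u x + (c * h) ^ 2 / 2 * deriv (deriv u) x))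
      =O[𝓝 0] fun h ↦ h ^ 3 := by
  simpa only [taylorWithinEval_univ_two, add_sub_cancel_left] using
    (isBigO_sub_taylorWithinEval (x₀ := x) (n := 2) hu).comp_add_mul c

theorem isBigO_mul_sub_taylor_one_deriv_comp_mul {u : ℝ → ℝ} (hu : ContDiff ℝ 3 u) (x c : ℝ) :
    (fun h ↦ h * (deriv u (x + c * h) - (deriv u x + c * h * deriv (deriv u) x)))
      =O[𝓝 0] fun h ↦ h ^ 3 := by
  have hu' : ContDiff ℝ (1 + 1) (deriv u) := hu.deriv'
  have hrem := (isBigO_sub_taylorWithinEval (x₀ := x) (n := 1) hu').comp_add_mul c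
  simp only [taylorWithinEval_univ_one, add_sub_cancel_left] at hrem
  simpa only [← pow_succ'] using (isBigO_refl (fun h : ℝ ↦ h) (𝓝 0)).mul hrem

theorem substencil_value_interpolations_third_order
    (u : ℝ → ℝ) (hu : ContDiff ℝ 3 u) (x : ℝ) :
    ((fun h : ℝ =>
        u (x + h / 2) -
          (-(5/4) * u (x - h) + (9/4) * u x - (3 * h / 4) * deriv u (x - h)))
        =O[nhds 0] fun h : ℝ => h ^ 3)
    ∧ ((fun h : ℝ =>
        u (x + h / 2) -
          ((1/4) * u x + (3/4) * u (x + h) - (h / 4) * deriv u (x + h)))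
        =O[nhds 0] fun h : ℝ => h ^ 3)
    ∧ ((fun h : ℝ =>
        u (x + h / 2) -
          (-(1/8) * u (x - h) + (3/4) * u x + (3/8) * u (x + h)))
        =O[nhds 0] fun h : ℝ => h ^ 3) := by
  have value := isBigO_sub_taylor_two_comp_mul hu x
  have slope := isBigO_mul_sub_taylor_one_deriv_comp_mul hu x
  refine ⟨?_, ?_, ?_⟩
  · refine ((value (1 / 2)).add (((value (-1)).const_mul_left (5 / 4)).add
      ((slope (-1)).const_mul_left (3 / 4)))).congr_left fun h ↦ ?_
    ring_nf
  · refine ((value (1 / 2)).add (((value 1).const_mul_left (-(3 / 4))).add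
      ((slope 1).const_mul_left (1 / 4)))).congr_left fun h ↦ ?_
    ring_nf
  · refine ((value (1 / 2)).add (((value (-1)).const_mul_left (1 / 8)).add
      ((value 1).const_mul_left (-(3 / 8))))).congr_left fun h ↦ ?_
    ring_nf
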